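/- Let D={β, 2α+β} and let ξ:D→ℂ∖{0} be a map. A linear form λ∈𝔫* belongs to the basic subvariety 𝒪_{D,ξ} if and only if λ_{2α+β}=ξ(2α+β), 2c₂λ_βλ_{2α+β} − c₁λ_{α+β}² = 2c₂ξ(β)ξ(2α+β), and λ_{3α+β}=λ_{3α+2β}=0 (with λ_α arbitrary). -/

import Mathlib

open scoped RealInnerProductSpace

/-- The exponential of a (nilpotent) endomorphism, as a finite sum. -/
noncomputable def expNil {M : Type*} [AddCommGroup M] [Module ℂ M] (A : Module.End ℂ M) :
    Module.End ℂ M :=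
  ∑ k ∈ Finset.range (nilpotencyClass A), (k.factorial : ℂ)⁻¹ • A ^ k

/-- The coadjoint orbit `Ω_{D,ξ}` of the linear form `f_{D,ξ} = ∑_{γ∈D} ξ(γ) e_γ*`,
consisting of all `f_{D,ξ} ∘ exp(−ad x)`, `x ∈ 𝔫`.  Roots are encoded by indices. -/
noncomputable def coadjointOrbit {ι : Type*} {n : Type*} [LieRing n] [LieAlgebra ℂ n]
    (e : Module.Basis ι ℂ n) (D : Finset ι) (ξ : ι → ℂ) :
    Set (Module.Dual ℂ n) :=
  {lam | ∃ x : n, lam = (∑ i ∈ D, ξ i • e.coord i).comp (expNil (-(LieAlgebra.ad ℂ n x)))}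

/-- The basic subvariety `𝒪_{D,ξ} = Σ_{γ∈D} Ω_{{γ},ξ|{γ}}`. -/
noncomputable def basicSubvariety {ι : Type*} [DecidableEq ι] {n : Type*} [LieRing n] [LieAlgebra ℂ n]
    (e : Module.Basis ι ℂ n) (D : Finset ι) (ξ : ι → ℂ) :
    Set (Module.Dual ℂ n) :=
  {lam | ∃ μ : ι → Module.Dual ℂ n,
    (∀ i ∈ D, μ i ∈ coadjointOrbit e {i} ξ) ∧ lam = ∑ i ∈ D, μ i}

/-!
The simple root `β` is not a sum of two positive roots, so `e_β*` is fixed by the coadjoint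
action and its orbit is a point. On the coordinates along `α, β, α+β, 2α+β` the bracket only
involves `c₁` and `c₂`, and `e_{2α+β}* ∘ (ad x)³ = 0`; hence the orbit of `ξ e_{2α+β}*` is
parametrised by the quadratic truncation of `exp (-ad x)`. Its points are exactly the forms with
`λ_{2α+β} = ξ`, `λ_{3α+β} = λ_{3α+2β} = 0`, `λ_α` arbitrary and `2 c₂ ξ λ_β = c₁ λ_{α+β}²`.
Subtracting the point `ξ(β) e_β*` gives the stated equations.
-/

open Module

theorem comp_expNil_eq_sum {M N : Type*} [AddCommGroup M] [Module ℂ M] [AddCommGroup N]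
    [Module ℂ N] {A : Module.End ℂ M} (hA : IsNilpotent A) (f : M →ₗ[ℂ] N) {m : ℕ}
    (hf : f ∘ₗ A ^ m = 0) :
    f ∘ₗ expNil A = ∑ k ∈ Finset.range m, (k.factorial : ℂ)⁻¹ • f ∘ₗ A ^ k := by
  have hvanish : ∀ k, m ≤ k ∨ nilpotencyClass A ≤ k → (k.factorial : ℂ)⁻¹ • f ∘ₗ A ^ k = 0 := by
    rintro k (hk | hk)
    · rw [← Nat.add_sub_cancel' hk, pow_add, Module.End.mul_eq_comp, ← LinearMap.comp_assoc, hf,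
        LinearMap.zero_comp, smul_zero]
    · rw [pow_eq_zero_of_le hk (pow_nilpotencyClass hA), LinearMap.comp_zero, smul_zero]
  have hexp : f ∘ₗ expNil A =
      ∑ k ∈ Finset.range (nilpotencyClass A), (k.factorial : ℂ)⁻¹ • f ∘ₗ A ^ k := by
    ext y
    simp [expNil, LinearMap.sum_apply]
  rw [hexp, Finset.sum_subset (Finset.range_subset_range.2 (le_max_left _ m)),
    ← Finset.sum_subset (Finset.range_subset_range.2 (le_max_right (nilpotencyClass A) m))]
  · intro k _ hk
    exact hvanish k (.inl (by simpa using hk))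
  · intro k _ hk
    exact hvanish k (.inr (by simpa using hk))

section CoadjointOrbit

variable {ι n : Type*} [LieRing n] [LieAlgebra ℂ n]

theorem Module.Basis.repr_lie [Fintype ι] (e : Basis ι ℂ n) (x y : n) (k : ι) :
    e.repr ⁅x, y⁆ k = ∑ i, ∑ j, e.repr x i * e.repr y j * e.repr ⁅e i, e j⁆ k := by
  conv_lhs => rw [← e.sum_repr x, ← e.sum_repr y]
  simp only [sum_lie, lie_sum, smul_lie, lie_smul, map_sum, map_smul, Finsupp.coe_finsetSum,
    Finset.sum_apply, Finsupp.smul_apply, smul_eq_mul, Finset.mul_sum]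
  rw [Finset.sum_comm]
  exact Finset.sum_congr rfl fun _ _ => Finset.sum_congr rfl fun _ _ => by ring

theorem coadjointOrbit_eq_singleton (e : Basis ι ℂ n) (ξ : ι → ℂ) (i : ι)
    (hnil : ∀ x : n, IsNilpotent (LieAlgebra.ad ℂ n x)) (hi : ∀ x y : n, e.repr ⁅x, y⁆ i = 0) :
    coadjointOrbit e {i} ξ = {ξ i • e.coord i} := by
  have hfix : ∀ x : n, (ξ i • e.coord i) ∘ₗ expNil (-LieAlgebra.ad ℂ n x) = ξ i • e.coord i := by
    intro x
    rw [comp_expNil_eq_sum (hnil x).neg _ (m := 1) (LinearMap.ext fun y => by simp [hi])]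
    simp only [Finset.sum_range_one, Nat.factorial_zero, Nat.cast_one, inv_one, pow_zero, one_smul]
    rfl
  ext lam
  simp [coadjointOrbit, hfix]

theorem mem_basicSubvariety_pair [DecidableEq ι] (e : Basis ι ℂ n) (ξ : ι → ℂ) {i j : ι}
    (hij : i ≠ j) (lam : Dual ℂ n) :
    lam ∈ basicSubvariety e {i, j} ξ ↔
      ∃ μ ∈ coadjointOrbit e {i} ξ, ∃ ν ∈ coadjointOrbit e {j} ξ, lam = μ + ν := by
  constructor
  · rintro ⟨μ, hμ, rfl⟩
    exact ⟨μ i, hμ i (by simp), μ j, hμ j (by simp), Finset.sum_pair hij⟩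
  · rintro ⟨μ, hμ, ν, hν, rfl⟩
    refine ⟨fun k => if k = i then μ else ν, ?_, ?_⟩
    · simp [hμ, hν, hij.symm]
    · simp [Finset.sum_pair hij, hij.symm]

end CoadjointOrbit

-- `g2Coeff k` are the coordinates in the basis `α, β` of the positive root indexed by `k`.
def g2Coeff : Fin 6 → ℕ × ℕ := ![(1, 0), (0, 1), (1, 1), (2, 1), (3, 1), (3, 2)]

theorem linearIndependent_pair_of_inner_sq_ne {E : Type*} [NormedAddCommGroup E]
    [InnerProductSpace ℝ E] {α β : E} (h : ⟪α, β⟫ ^ 2 ≠ ⟪α, α⟫ * ⟪β, β⟫) :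
    LinearIndependent ℝ ![α, β] := by
  rw [LinearIndependent.pair_iff]
  intro s t hst
  have hα := congrArg (⟪·, α⟫) hst
  have hβ := congrArg (⟪·, β⟫) hst
  simp only [inner_add_left, real_inner_smul_left, inner_zero_left, real_inner_comm α β] at hα hβ
  have hdet : ⟪α, α⟫ * ⟪β, β⟫ - ⟪α, β⟫ ^ 2 ≠ 0 := sub_ne_zero.2 h.symm
  constructor
  · exact (mul_eq_zero.1 (by linear_combination ⟪β, β⟫ * hα - ⟪α, β⟫ * hβ :
      s * (⟪α, α⟫ * ⟪β, β⟫ - ⟪α, β⟫ ^ 2) = 0)).resolve_right hdet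
  · exact (mul_eq_zero.1 (by linear_combination ⟪α, α⟫ * hβ - ⟪α, β⟫ * hα :
      t * (⟪α, α⟫ * ⟪β, β⟫ - ⟪α, β⟫ ^ 2) = 0)).resolve_right hdet

theorem g2_root_add_notMem_range {E : Type*} [AddCommGroup E] [Module ℝ E] {α β : E}
    (hli : LinearIndependent ℝ ![α, β]) {root : Fin 6 → E}
    (hroot : root = ![α, β, α + β, (2:ℝ) • α + β, (3:ℝ) • α + β, (3:ℝ) • α + (2:ℝ) • β])
    {i j : Fin 6} (h : ∀ k, g2Coeff i + g2Coeff j ≠ g2Coeff k) :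
    root i + root j ∉ Set.range root := by
  have hcoeff : ∀ k, root k = ((g2Coeff k).1 : ℝ) • α + ((g2Coeff k).2 : ℝ) • β := by
    subst hroot
    intro k
    fin_cases k <;> simp [g2Coeff]
  rintro ⟨k, hk⟩
  have hsum : (((g2Coeff i + g2Coeff j).1 : ℕ) : ℝ) • α + (((g2Coeff i + g2Coeff j).2 : ℕ) : ℝ) • β
      = ((g2Coeff k).1 : ℝ) • α + ((g2Coeff k).2 : ℝ) • β := by
    rw [← hcoeff, hk, hcoeff, hcoeff, Prod.fst_add, Prod.snd_add]
    push_cast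
    module
  obtain ⟨h1, h2⟩ := hli.eq_of_pair hsum
  exact h k (Prod.ext (by exact_mod_cast h1) (by exact_mod_cast h2))

section G2

variable {n : Type*} [LieRing n] [LieAlgebra ℂ n]

structure IsG2Basis (e : Basis (Fin 6) ℂ n) (c₁ c₂ c₃ c₄ c₅ : ℂ) : Prop where
  lie_zero_one : ⁅e 0, e 1⁆ = c₁ • e 2
  lie_zero_two : ⁅e 0, e 2⁆ = c₂ • e 3
  lie_zero_three : ⁅e 0, e 3⁆ = c₃ • e 4
  lie_four_one : ⁅e 4, e 1⁆ = c₄ • e 5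
  lie_two_three : ⁅e 2, e 3⁆ = c₅ • e 5
  lie_eq_zero : ∀ i j, (∀ k, g2Coeff i + g2Coeff j ≠ g2Coeff k) → ⁅e i, e j⁆ = 0

namespace IsG2Basis

variable {e : Basis (Fin 6) ℂ n} {c₁ c₂ c₃ c₄ c₅ : ℂ}

theorem repr_lie_basis_eq_zero (he : IsG2Basis e c₁ c₂ c₃ c₄ c₅) {i j k : Fin 6}
    (h : g2Coeff i + g2Coeff j ≠ g2Coeff k) :
    e.repr ⁅e i, e j⁆ k = 0 := by
  have hsingle : ∀ (k' : Fin 6) (c : ℂ), (⁅e i, e j⁆ = c • e k' ∨ ⁅e j, e i⁆ = c • e k') →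
      g2Coeff i + g2Coeff j = g2Coeff k' → e.repr ⁅e i, e j⁆ k = 0 := by
    rintro k' c hc hk'
    have hne : k' ≠ k := by
      rintro rfl
      exact h hk'
    rcases hc with hc | hc
    · simp [hc, hne]
    · rw [← lie_skew, hc]
      simp [hne]
  -- A pair whose sum is a root is one of the five given brackets or its reverse.
  fin_cases i <;> fin_cases j <;>
    first
    | exact hsingle _ _ (.inl he.lie_zero_one) (by decide)
    | exact hsingle _ _ (.inr he.lie_zero_one) (by decide)
    | exact hsingle _ _ (.inl he.lie_zero_two) (by decide)
    | exact hsingle _ _ (.inr he.lie_zero_two) (by decide)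
    | exact hsingle _ _ (.inl he.lie_zero_three) (by decide)
    | exact hsingle _ _ (.inr he.lie_zero_three) (by decide)
    | exact hsingle _ _ (.inl he.lie_four_one) (by decide)
    | exact hsingle _ _ (.inr he.lie_four_one) (by decide)
    | exact hsingle _ _ (.inl he.lie_two_three) (by decide)
    | exact hsingle _ _ (.inr he.lie_two_three) (by decide)
    | rw [he.lie_eq_zero _ _ (by decide), map_zero, Finsupp.zero_apply]

theorem repr_lie_zero (he : IsG2Basis e c₁ c₂ c₃ c₄ c₅) (x y : n) : e.repr ⁅x, y⁆ 0 = 0 := by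
  rw [e.repr_lie]
  simp (disch := decide) only [Fin.sum_univ_six, he.repr_lie_basis_eq_zero, mul_zero, add_zero]

theorem repr_lie_one (he : IsG2Basis e c₁ c₂ c₃ c₄ c₅) (x y : n) : e.repr ⁅x, y⁆ 1 = 0 := by
  rw [e.repr_lie]
  simp (disch := decide) only [Fin.sum_univ_six, he.repr_lie_basis_eq_zero, mul_zero, add_zero]

theorem repr_lie_two (he : IsG2Basis e c₁ c₂ c₃ c₄ c₅) (x y : n) :
    e.repr ⁅x, y⁆ 2 = c₁ * (e.repr x 0 * e.repr y 1 - e.repr x 1 * e.repr y 0) := by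
  rw [e.repr_lie]
  simp (disch := decide) only [Fin.sum_univ_six, he.repr_lie_basis_eq_zero, mul_zero, add_zero,
    zero_add]
  rw [← lie_skew (e 1) (e 0), he.lie_zero_one]
  simp only [map_neg, map_smul, Finsupp.coe_neg, Finsupp.coe_smul, Pi.neg_apply, Pi.smul_apply,
    Basis.repr_self, Finsupp.single_eq_same, smul_eq_mul, mul_one]
  ring

theorem repr_lie_three (he : IsG2Basis e c₁ c₂ c₃ c₄ c₅) (x y : n) :
    e.repr ⁅x, y⁆ 3 = c₂ * (e.repr x 0 * e.repr y 2 - e.repr x 2 * e.repr y 0) := by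
  rw [e.repr_lie]
  simp (disch := decide) only [Fin.sum_univ_six, he.repr_lie_basis_eq_zero, mul_zero, add_zero,
    zero_add]
  rw [← lie_skew (e 2) (e 0), he.lie_zero_two]
  simp only [map_neg, map_smul, Finsupp.coe_neg, Finsupp.coe_smul, Pi.neg_apply, Pi.smul_apply,
    Basis.repr_self, Finsupp.single_eq_same, smul_eq_mul, mul_one]
  ring

theorem coord_three_comp_expNil_apply (he : IsG2Basis e c₁ c₂ c₃ c₄ c₅)
    (hnil : ∀ x : n, IsNilpotent (LieAlgebra.ad ℂ n x)) (a : ℂ) (x y : n) :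
    ((a • e.coord 3) ∘ₗ expNil (-LieAlgebra.ad ℂ n x)) y =
      a * (e.repr y 3 - c₂ * (e.repr x 0 * e.repr y 2 - e.repr x 2 * e.repr y 0)
        + c₁ * c₂ / 2 * e.repr x 0 * (e.repr x 0 * e.repr y 1 - e.repr x 1 * e.repr y 0)) := by
  have hcube : (a • e.coord 3) ∘ₗ (-LieAlgebra.ad ℂ n x) ^ 3 = 0 := by
    ext y
    simp [pow_succ, he.repr_lie_three, he.repr_lie_two, he.repr_lie_zero, he.repr_lie_one]
  rw [comp_expNil_eq_sum (hnil x).neg _ hcube]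
  simp only [Finset.sum_range_succ, Finset.sum_range_zero, zero_add, pow_succ, pow_zero, one_mul,
    LinearMap.add_apply, LinearMap.smul_apply, LinearMap.comp_apply, Module.End.mul_apply,
    Module.End.one_apply, LinearMap.neg_apply, LieAlgebra.ad_apply, map_neg, Basis.coord_apply,
    he.repr_lie_three, he.repr_lie_two, he.repr_lie_zero, smul_eq_mul]
  norm_num [Nat.factorial]
  ring

theorem mem_coadjointOrbit_three_iff (he : IsG2Basis e c₁ c₂ c₃ c₄ c₅)
    (hnil : ∀ x : n, IsNilpotent (LieAlgebra.ad ℂ n x)) (hc₂ : c₂ ≠ 0) (ξ : Fin 6 → ℂ)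
    (hξ₃ : ξ 3 ≠ 0) (lam : Dual ℂ n) :
    lam ∈ coadjointOrbit e {3} ξ ↔ lam (e 3) = ξ 3 ∧ lam (e 4) = 0 ∧ lam (e 5) = 0 ∧
      2 * c₂ * ξ 3 * lam (e 1) = c₁ * lam (e 2) ^ 2 := by
  simp only [coadjointOrbit, Finset.sum_singleton, Set.mem_ofPred_eq]
  constructor
  · rintro ⟨x, rfl⟩
    simp only [he.coord_three_comp_expNil_apply hnil, Basis.repr_self]
    simp (disch := decide) only [Finsupp.single_eq_same, Finsupp.single_eq_of_ne]
    exact ⟨by ring, by ring, by ring, by ring⟩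
  · rintro ⟨h3, h4, h5, hrel⟩
    -- With `x = t e_α + s e_{α+β}`, `t` is read off `λ_{α+β}` and `s` off `λ_α`; `hrel` then
    -- gives the right `λ_β`.
    refine ⟨(-lam (e 2) / (ξ 3 * c₂)) • e 0 + (lam (e 0) / (ξ 3 * c₂)) • e 2, e.ext fun j => ?_⟩
    rw [he.coord_three_comp_expNil_apply hnil]
    simp only [map_add, map_smul, Basis.repr_self, Finsupp.coe_add, Finsupp.coe_smul, Pi.add_apply,
      Pi.smul_apply, smul_eq_mul]
    fin_cases j <;> simp (disch := decide) only [Fin.zero_eta, Fin.mk_one, Fin.reduceFinMk,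
      Fin.isValue, Finsupp.single_eq_same, Finsupp.single_eq_of_ne]
    · field_simp
      ring
    · field_simp
      linear_combination hrel
    · field_simp
      ring
    · rw [h3]
      ring
    · rw [h4]
      ring
    · rw [h5]
      ring

end IsG2Basis

end G2

theorem stmt5_general {n : Type*} [LieRing n] [LieAlgebra ℂ n]
    (α β : EuclideanSpace ℝ (Fin 2))
    (hαα : ⟪α, α⟫ = 1) (hββ : ⟪β, β⟫ = 3) (hαβ : ⟪α, β⟫ = -(3/2))
    -- the six positive roots of `G₂`: `α, β, α+β, 2α+β, 3α+β, 3α+2β`, indexed by `Fin 6`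
    (root : Fin 6 → EuclideanSpace ℝ (Fin 2))
    (hroot : root = ![α, β, α + β, (2:ℝ) • α + β, (3:ℝ) • α + β, (3:ℝ) • α + (2:ℝ) • β])
    (c₁ c₂ c₃ c₄ c₅ : ℂ)
    (hc₂ : c₂ ≠ 0)
    (e : Module.Basis (Fin 6) ℂ n)
    (h01 : ⁅e 0, e 1⁆ = c₁ • e 2)
    (h02 : ⁅e 0, e 2⁆ = c₂ • e 3)
    (h03 : ⁅e 0, e 3⁆ = c₃ • e 4)
    (h41 : ⁅e 4, e 1⁆ = c₄ • e 5)
    (h23 : ⁅e 2, e 3⁆ = c₅ • e 5)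
    (h0 : ∀ i j : Fin 6, root i + root j ∉ Set.range root → ⁅e i, e j⁆ = 0)
    (hnil : ∀ x : n, IsNilpotent (LieAlgebra.ad ℂ n x))
    (ξ : Fin 6 → ℂ) (hξ₃ : ξ 3 ≠ 0)
    (lam : Module.Dual ℂ n) :
    lam ∈ basicSubvariety e {1, 3} ξ ↔
      (lam (e 3) = ξ 3 ∧
        2 * c₂ * lam (e 1) * lam (e 3) - c₁ * lam (e 2) ^ 2 = 2 * c₂ * ξ 1 * ξ 3 ∧
        lam (e 4) = 0 ∧ lam (e 5) = 0) := by
  have hli : LinearIndependent ℝ ![α, β] :=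
    linearIndependent_pair_of_inner_sq_ne (by rw [hαα, hββ, hαβ]; norm_num)
  have he : IsG2Basis e c₁ c₂ c₃ c₄ c₅ :=
    ⟨h01, h02, h03, h41, h23, fun i j h => h0 i j (g2_root_add_notMem_range hli hroot h)⟩
  rw [mem_basicSubvariety_pair e ξ (by decide : (1 : Fin 6) ≠ 3) lam,
    coadjointOrbit_eq_singleton e ξ 1 hnil he.repr_lie_one]
  simp only [Set.mem_singleton_iff, exists_eq_left, ← sub_eq_iff_eq_add', exists_eq_right',
    he.mem_coadjointOrbit_three_iff hnil hc₂ ξ hξ₃, LinearMap.sub_apply, LinearMap.smul_apply,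
    Basis.coord_apply, Basis.repr_self, smul_eq_mul]
  simp (disch := decide) only [Finsupp.single_eq_same, Finsupp.single_eq_of_ne, mul_zero,
    sub_zero, mul_one]
  constructor
  · rintro ⟨h3, h4, h5, hrel⟩
    exact ⟨h3, by rw [h3]; linear_combination hrel, h4, h5⟩
  · rintro ⟨h3, hrel, h4, h5⟩
    exact ⟨h3, h4, h5, by rw [h3] at hrel; linear_combination hrel⟩

theorem stmt5 {n : Type*} [LieRing n] [LieAlgebra ℂ n]
    (α β : EuclideanSpace ℝ (Fin 2))
    (hαα : ⟪α, α⟫ = 1) (hββ : ⟪β, β⟫ = 3) (hαβ : ⟪α, β⟫ = -(3/2))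
    -- the six positive roots of `G₂`: `α, β, α+β, 2α+β, 3α+β, 3α+2β`, indexed by `Fin 6`
    (root : Fin 6 → EuclideanSpace ℝ (Fin 2))
    (hroot : root = ![α, β, α + β, (2:ℝ) • α + β, (3:ℝ) • α + β, (3:ℝ) • α + (2:ℝ) • β])
    (c₁ c₂ c₃ c₄ c₅ : ℂ)
    (hc₁ : c₁ ≠ 0) (hc₂ : c₂ ≠ 0) (hc₃ : c₃ ≠ 0) (hc₄ : c₄ ≠ 0) (hc₅ : c₅ ≠ 0)
    (e : Module.Basis (Fin 6) ℂ n)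
    (h01 : ⁅e 0, e 1⁆ = c₁ • e 2)
    (h02 : ⁅e 0, e 2⁆ = c₂ • e 3)
    (h03 : ⁅e 0, e 3⁆ = c₃ • e 4)
    (h41 : ⁅e 4, e 1⁆ = c₄ • e 5)
    (h23 : ⁅e 2, e 3⁆ = c₅ • e 5)
    (h0 : ∀ i j : Fin 6, root i + root j ∉ Set.range root → ⁅e i, e j⁆ = 0)
    (hnil : ∀ x : n, IsNilpotent (LieAlgebra.ad ℂ n x))
    (ξ : Fin 6 → ℂ) (hξ₁ : ξ 1 ≠ 0) (hξ₃ : ξ 3 ≠ 0)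
    (lam : Module.Dual ℂ n) :
    lam ∈ basicSubvariety e {1, 3} ξ ↔
      (lam (e 3) = ξ 3 ∧
        2 * c₂ * lam (e 1) * lam (e 3) - c₁ * lam (e 2) ^ 2 = 2 * c₂ * ξ 1 * ξ 3 ∧
        lam (e 4) = 0 ∧ lam (e 5) = 0) :=
  stmt5_general α β hαα hββ hαβ root hroot c₁ c₂ c₃ c₄ c₅ hc₂ e h01 h02 h03 h41 h23 h0 hnil ξ hξ₃
    lam
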